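/- arXiv:1402.1511 — 2 statements merged into one kernel-verified Lean document; each statement's English description precedes it below -/
import Mathlib

section
/- Let Λ be a compact invariant nonsingular set with a continuous invariant splitting T_ΛM = E ⊕ F for a flow X_t such that E is uniformly contracted (‖DX_t|_{E_x}‖ ≤ C e^{-λt} for all t ≥ 0). Then the flow direction is contained in F: X(x) ∈ F_x for every x ∈ Λ. -/
noncomputable def opNormOn {V : Type*} [NormedAddCommGroup V] [NormedSpace ℝ V]
    (A : V →L[ℝ] V) (F : Submodule ℝ V) : ℝ :=
  ‖A.comp F.subtypeL‖

/-- If `E ⊕ F` is a continuous invariant splitting over a compact invariant nonsingular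
set and `E` is uniformly contracted, then the flow direction is contained in `F`.
Continuity of the splitting is encoded by a continuous family of projections `π x`
with range `E x` and kernel `F x`. -/
theorem stmt6 {n : ℕ} {Λ : Type*} [TopologicalSpace Λ] [CompactSpace Λ]
    (φ : ℝ → Λ → Λ) (hφ0 : ∀ x, φ 0 x = x)
    (hφadd : ∀ s t x, φ (t + s) x = φ t (φ s x))
    (D : ℝ → Λ → (EuclideanSpace ℝ (Fin n) →L[ℝ] EuclideanSpace ℝ (Fin n)))
    (hD0 : ∀ x, D 0 x = ContinuousLinearMap.id ℝ _)
    (hDco : ∀ s t x, D (t + s) x = (D t (φ s x)).comp (D s x))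
    (X : Λ → EuclideanSpace ℝ (Fin n)) (hXcont : Continuous X)
    (hXne : ∀ x, X x ≠ 0) (hXinv : ∀ t x, D t x (X x) = X (φ t x))
    (E F : Λ → Submodule ℝ (EuclideanSpace ℝ (Fin n)))
    (π : Λ → (EuclideanSpace ℝ (Fin n) →L[ℝ] EuclideanSpace ℝ (Fin n)))
    (hπcont : Continuous π)
    (hπproj : ∀ x, (π x).comp (π x) = π x)
    (hπranE : ∀ x, LinearMap.range (π x).toLinearMap = E x)
    (hπkerF : ∀ x, LinearMap.ker (π x).toLinearMap = F x)
    (hEinv : ∀ t x, (E x).map (D t x).toLinearMap = E (φ t x))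
    (hFinv : ∀ t x, (F x).map (D t x).toLinearMap = F (φ t x))
    (C lam : ℝ) (hC : 0 < C) (hlam : 0 < lam)
    (hcontr : ∀ x, ∀ t ≥ 0, opNormOn (D t x) (E x) ≤ C * Real.exp (-lam * t)) :
    ∀ x, X x ∈ F x := by
  intro x
  have hmemE : ∀ y (v : EuclideanSpace ℝ (Fin n)), π y v ∈ E y := by
    intro y v; rw [← hπranE]; exact ⟨v, rfl⟩
  have hproj_fix : ∀ y (v : EuclideanSpace ℝ (Fin n)), v ∈ E y → π y v = v := by
    intro y v hv
    rw [← hπranE] at hv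
    obtain ⟨u, rfl⟩ := hv
    have := congrArg (fun A => A u) (hπproj y)
    simpa using this
  have hkey : ∀ t z, π (φ t z) (X (φ t z)) = D t z (π z (X z)) := by
    intro t z
    have ha : D t z (π z (X z)) ∈ E (φ t z) := by
      rw [← hEinv t z]
      exact Submodule.mem_map_of_mem (hmemE z (X z))
    have hb : D t z (X z - π z (X z)) ∈ F (φ t z) := by
      rw [← hFinv t z]
      refine Submodule.mem_map_of_mem ?_
      rw [← hπkerF]
      simp [LinearMap.mem_ker, map_sub, hproj_fix z _ (hmemE z (X z))]
    have hsplit : X (φ t z) = D t z (π z (X z)) + D t z (X z - π z (X z)) := by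
      rw [← map_add, ← hXinv t z]; congr 1; abel
    rw [hsplit, map_add, hproj_fix _ _ ha]
    have hzero : π (φ t z) (D t z (X z - π z (X z))) = 0 := by
      rw [← hπkerF] at hb; exact hb
    rw [hzero, add_zero]
  have hbnd : ∀ t z (v : EuclideanSpace ℝ (Fin n)), v ∈ E z → 0 ≤ t →
      ‖D t z v‖ ≤ C * Real.exp (-lam * t) * ‖v‖ := by
    intro t z v hv ht
    have h1 : ‖((D t z).comp (E z).subtypeL) (⟨v, hv⟩ : E z)‖ ≤
        ‖(D t z).comp (E z).subtypeL‖ * ‖(⟨v, hv⟩ : E z)‖ :=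
      ContinuousLinearMap.le_opNorm _ _
    have h2 : ‖(D t z).comp (E z).subtypeL‖ ≤ C * Real.exp (-lam * t) := hcontr z t ht
    calc ‖D t z v‖ = ‖((D t z).comp (E z).subtypeL) (⟨v, hv⟩ : E z)‖ := rfl
      _ ≤ ‖(D t z).comp (E z).subtypeL‖ * ‖(⟨v, hv⟩ : E z)‖ := h1
      _ ≤ C * Real.exp (-lam * t) * ‖v‖ := by
          exact mul_le_mul_of_nonneg_right h2 (norm_nonneg _)
  -- uniform bounds on ‖π y‖ and ‖X y‖
  obtain ⟨P, hP⟩ := (isCompact_range (hπcont.norm)).bddAbove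
  obtain ⟨M, hM⟩ := (isCompact_range (hXcont.norm)).bddAbove
  have hPy : ∀ y, ‖π y‖ ≤ P := fun y => hP ⟨y, rfl⟩
  have hMy : ∀ y, ‖X y‖ ≤ M := fun y => hM ⟨y, rfl⟩
  have hM0 : 0 ≤ M := le_trans (norm_nonneg _) (hMy x)
  have hP0 : 0 ≤ P := le_trans (norm_nonneg _) (hPy x)
  have hmain : ∀ t : ℝ, 0 ≤ t → ‖π x (X x)‖ ≤ C * Real.exp (-lam * t) * (P * M) := by
    intro t ht
    set z := φ (-t) x with hz
    have hφtz : φ t z = x := by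
      rw [hz, ← hφadd, add_neg_cancel, hφ0]
    have := hkey t z
    rw [hφtz] at this
    rw [this]
    have h1 := hbnd t z (π z (X z)) (hmemE z (X z)) ht
    refine h1.trans ?_
    have h2 : ‖π z (X z)‖ ≤ P * M := by
      calc ‖π z (X z)‖ ≤ ‖π z‖ * ‖X z‖ := ContinuousLinearMap.le_opNorm _ _
        _ ≤ P * M := mul_le_mul (hPy z) (hMy z) (norm_nonneg _) hP0
    exact mul_le_mul_of_nonneg_left h2
      (mul_nonneg hC.le (Real.exp_pos _).le)
  have hlim : Filter.Tendsto (fun t : ℝ => C * Real.exp (-lam * t) * (P * M))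
      Filter.atTop (nhds 0) := by
    have h1 : Filter.Tendsto (fun t : ℝ => -lam * t) Filter.atTop Filter.atBot := by
      have h0 : Filter.Tendsto (fun t : ℝ => lam * t) Filter.atTop Filter.atTop :=
        Filter.Tendsto.const_mul_atTop hlam Filter.tendsto_id
      exact (Filter.tendsto_neg_atTop_atBot.comp h0).congr (fun t => by simp [neg_mul])
    have h2 : Filter.Tendsto (fun t : ℝ => Real.exp (-lam * t)) Filter.atTop (nhds 0) :=
      Real.tendsto_exp_atBot.comp h1
    have h3 := (h2.const_mul C).mul_const (P * M)
    simpa using h3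
  have hle : ‖π x (X x)‖ ≤ 0 := by
    refine ge_of_tendsto hlim ?_
    filter_upwards [Filter.eventually_ge_atTop 0] with t ht
    exact hmain t ht
  have hzero : π x (X x) = 0 := norm_eq_zero.mp (le_antisymm hle (norm_nonneg _))
  have hmem : X x ∈ LinearMap.ker (π x).toLinearMap := LinearMap.mem_ker.mpr hzero
  rwa [hπkerF] at hmem
end

section
/- A compact invariant nonsingular set Λ is hyperbolic for a flow X_t if and only if the associated linear Poincaré flow has a hyperbolic splitting on Λ: the normal bundle decomposes as N = N^s ⊕ N^u with N^s uniformly contracted and N^u uniformly expanded by P_t. -/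
open Filter Topology RealInnerProductSpace


/-- The linear Poincaré flow associated to the cocycle `D` (the derivative of the flow
`φ`) and the vector field `X`: orthogonal projection onto the normal bundle of the flow
direction, composed with `D`. -/
noncomputable def poincare {n : ℕ} {Λ : Type*}
    (φ : ℝ → Λ → Λ)
    (D : ℝ → Λ → (EuclideanSpace ℝ (Fin n) →L[ℝ] EuclideanSpace ℝ (Fin n)))
    (X : Λ → EuclideanSpace ℝ (Fin n)) (t : ℝ) (x : Λ) :
    EuclideanSpace ℝ (Fin n) →L[ℝ] EuclideanSpace ℝ (Fin n) :=
  (((ℝ ∙ X (φ t x))ᗮ).subtypeL.comp (Submodule.orthogonalProjectionOnto (ℝ ∙ X (φ t x))ᗮ)).comp (D t x)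

namespace Stmt13Aux


variable {n : ℕ}

local notation "V" n => EuclideanSpace ℝ (Fin n)

/-- Orthogonal projection onto the orthogonal complement of `ℝ ∙ y`, as a map `V →L V`. -/
noncomputable def pr (y : EuclideanSpace ℝ (Fin n)) :
    EuclideanSpace ℝ (Fin n) →L[ℝ] EuclideanSpace ℝ (Fin n) :=
  ((ℝ ∙ y)ᗮ).subtypeL.comp (Submodule.orthogonalProjectionOnto (ℝ ∙ y)ᗮ)

lemma pr_apply (y v : EuclideanSpace ℝ (Fin n)) :
    pr y v = (Submodule.orthogonalProjectionOnto (ℝ ∙ y)ᗮ v : EuclideanSpace ℝ (Fin n)) := rfl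

lemma pr_mem (y v : EuclideanSpace ℝ (Fin n)) : pr y v ∈ (ℝ ∙ y)ᗮ := by
  rw [pr_apply]; exact Submodule.coe_mem _

lemma pr_eq_self {y v : EuclideanSpace ℝ (Fin n)} (h : v ∈ (ℝ ∙ y)ᗮ) : pr y v = v := by
  rw [pr_apply, ← Submodule.starProjection_apply, Submodule.starProjection_eq_self_iff.mpr h]

lemma sub_pr (y v : EuclideanSpace ℝ (Fin n)) :
    v - pr y v = (⟪y, v⟫ / ((‖y‖ : ℝ) ^ 2)) • y := by
  rw [pr_apply, ← Submodule.starProjection_apply, Submodule.starProjection_orthogonal_val, sub_sub_cancel,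
    Submodule.starProjection_singleton]
  norm_num

lemma exists_sub_pr (y v : EuclideanSpace ℝ (Fin n)) : ∃ c : ℝ, v - pr y v = c • y :=
  ⟨_, sub_pr y v⟩

lemma pr_smul_self (y : EuclideanSpace ℝ (Fin n)) (c : ℝ) : pr y (c • y) = 0 := by
  have h : c • y ∈ (ℝ ∙ y) := Submodule.smul_mem _ _ (Submodule.mem_span_singleton_self y)
  rw [pr_apply, Submodule.orthogonalProjectionOnto_apply_of_mem_orthogonal
    ((ℝ ∙ y).le_orthogonal_orthogonal h), Submodule.coe_zero]

lemma norm_pr_le (y v : EuclideanSpace ℝ (Fin n)) : ‖pr y v‖ ≤ ‖v‖ := by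
  rw [pr_apply]
  calc ‖(Submodule.orthogonalProjectionOnto (ℝ ∙ y)ᗮ v : EuclideanSpace ℝ (Fin n))‖
      = ‖Submodule.orthogonalProjectionOnto (ℝ ∙ y)ᗮ v‖ := rfl
    _ ≤ ‖Submodule.orthogonalProjectionOnto (ℝ ∙ y)ᗮ‖ * ‖v‖ := (Submodule.orthogonalProjectionOnto (ℝ ∙ y)ᗮ).le_opNorm v
    _ ≤ 1 * ‖v‖ :=
        mul_le_mul_of_nonneg_right (Submodule.orthogonalProjectionOnto_norm_le _) (norm_nonneg v)
    _ = ‖v‖ := one_mul _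

lemma norm_le_opNormOn {W : Type*} [NormedAddCommGroup W] [NormedSpace ℝ W]
    (A : W →L[ℝ] W) (F : Submodule ℝ W) {v : W} (hv : v ∈ F) :
    ‖A v‖ ≤ opNormOn A F * ‖v‖ := by
  have := (A.comp F.subtypeL).le_opNorm ⟨v, hv⟩
  simpa [opNormOn] using this

lemma opNormOn_le {W : Type*} [NormedAddCommGroup W] [NormedSpace ℝ W]
    (A : W →L[ℝ] W) (F : Submodule ℝ W) {c : ℝ} (hc : 0 ≤ c)
    (h : ∀ v ∈ F, ‖A v‖ ≤ c * ‖v‖) : opNormOn A F ≤ c := by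
  refine ContinuousLinearMap.opNorm_le_bound _ hc fun u => ?_
  simpa using h u u.2

/-- Telescoping a unit-step Cauchy estimate. -/
lemma telescope (c : ℝ → ℝ) (B lam : ℝ) (hB : 0 ≤ B) (hlam : 0 < lam)
    (hstep : ∀ s ≥ (0:ℝ), ∀ t ∈ Set.Icc (0:ℝ) 1, |c (t + s) - c s| ≤ B * Real.exp (-lam * s)) :
    ∀ s ≥ (0:ℝ), ∀ s' ≥ s, |c s' - c s| ≤ B / (1 - Real.exp (-lam)) * Real.exp (-lam * s) := by
  have hr1 : Real.exp (-lam) < 1 := Real.exp_lt_one_iff.mpr (by linarith)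
  have hr0 : (0:ℝ) < Real.exp (-lam) := Real.exp_pos _
  have hden : (0:ℝ) < 1 - Real.exp (-lam) := by linarith
  have key : ∀ N : ℕ, ∀ s ≥ (0:ℝ), ∀ s', s ≤ s' → s' ≤ s + N →
      |c s' - c s| ≤ B / (1 - Real.exp (-lam)) * Real.exp (-lam * s) := by
    intro N
    induction N with
    | zero =>
      intro s hs s' h1 h2
      have : s' = s := le_antisymm (by simpa using h2) h1
      subst this
      simp only [sub_self, abs_zero]
      positivity
    | succ N ih =>
      intro s hs s' h1 h2
      by_cases hcase : s' ≤ s + 1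
      · have := hstep s hs (s' - s) ⟨by linarith, by linarith⟩
        rw [sub_add_cancel] at this
        calc |c s' - c s| ≤ B * Real.exp (-lam * s) := this
          _ ≤ B / (1 - Real.exp (-lam)) * Real.exp (-lam * s) := by
              apply mul_le_mul_of_nonneg_right _ (le_of_lt (Real.exp_pos _))
              rw [le_div_iff₀ hden]
              nlinarith
      · push_neg at hcase
        have h3 : |c (s+1) - c s| ≤ B * Real.exp (-lam * s) := by
          have := hstep s hs 1 ⟨zero_le_one, le_refl 1⟩
          rwa [add_comm] at this
        have h4 : |c s' - c (s+1)| ≤ B / (1 - Real.exp (-lam)) * Real.exp (-lam * (s+1)) :=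
          ih (s+1) (by linarith) s' (le_of_lt hcase) (by push_cast at h2 ⊢; linarith)
        have hexp : Real.exp (-lam * (s+1)) = Real.exp (-lam * s) * Real.exp (-lam) := by
          rw [← Real.exp_add]; ring_nf
        calc |c s' - c s| ≤ |c s' - c (s+1)| + |c (s+1) - c s| := abs_sub_le _ _ _
          _ ≤ B / (1 - Real.exp (-lam)) * Real.exp (-lam * (s+1)) + B * Real.exp (-lam * s) := by
              linarith
          _ = (B / (1 - Real.exp (-lam)) * Real.exp (-lam) + B) * Real.exp (-lam * s) := by
              rw [hexp]; ring
          _ ≤ B / (1 - Real.exp (-lam)) * Real.exp (-lam * s) := by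
              apply mul_le_mul_of_nonneg_right _ (le_of_lt (Real.exp_pos _))
              rw [div_mul_eq_mul_div, div_add' _ _ _ (ne_of_gt hden), div_le_div_iff₀ hden hden]
              nlinarith
  intro s hs s' hs'
  obtain ⟨N, hN⟩ := exists_nat_ge (s' - s)
  exact key N s hs s' hs' (by linarith)

lemma tendsto_exp_decay (A lam : ℝ) (hlam : 0 < lam) :
    Tendsto (fun s : ℝ => A * Real.exp (-lam * s)) atTop (𝓝 0) := by
  have h1 : Tendsto (fun s : ℝ => -(lam * s)) atTop atBot :=
    tendsto_neg_atBot_iff.mpr ((tendsto_const_mul_atTop_of_pos hlam).mpr tendsto_id)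
  have h2 : Tendsto (fun s : ℝ => Real.exp (-(lam * s))) atTop (𝓝 0) :=
    Real.tendsto_exp_atBot.comp h1
  simpa [neg_mul] using h2.const_mul A

lemma limit_of_telescope (c : ℝ → ℝ) (A lam : ℝ) (hlam : 0 < lam)
    (h : ∀ s ≥ (0:ℝ), ∀ s' ≥ s, |c s' - c s| ≤ A * Real.exp (-lam * s)) :
    ∃ L : ℝ, Tendsto c atTop (𝓝 L) ∧ ∀ s ≥ (0:ℝ), |c s - L| ≤ A * Real.exp (-lam * s) := by
  have hA : 0 ≤ A := by
    have := h 0 le_rfl 0 le_rfl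
    simp at this
    linarith [this]
  have hcauchy : CauchySeq c := by
    rw [Metric.cauchySeq_iff']
    intro ε hε
    have := (tendsto_exp_decay A lam hlam).eventually (eventually_lt_nhds hε)
    rw [eventually_atTop] at this
    obtain ⟨N₀, hN₀⟩ := this
    refine ⟨max N₀ 0, fun s hs => ?_⟩
    have h1 := h (max N₀ 0) (le_max_right _ _) s hs
    have h2 := hN₀ (max N₀ 0) (le_max_left _ _)
    calc dist (c s) (c (max N₀ 0)) = |c s - c (max N₀ 0)| := Real.dist_eq _ _
      _ ≤ A * Real.exp (-lam * max N₀ 0) := h1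
      _ < ε := h2
  obtain ⟨L, hL⟩ := cauchySeq_tendsto_of_complete hcauchy
  refine ⟨L, hL, fun s hs => ?_⟩
  have htend : Tendsto (fun s' => |c s' - c s|) atTop (𝓝 |L - c s|) :=
    ((hL.sub tendsto_const_nhds).abs)
  have : |L - c s| ≤ A * Real.exp (-lam * s) :=
    le_of_tendsto htend (eventually_atTop.mpr ⟨s, fun s' hs' => h s hs s' hs'⟩)
  rwa [abs_sub_comm]


section Flow
variable {n : ℕ} {Λ : Type*} [TopologicalSpace Λ] [CompactSpace Λ]
  (φ : ℝ → Λ → Λ) (D : ℝ → Λ → (EuclideanSpace ℝ (Fin n) →L[ℝ] EuclideanSpace ℝ (Fin n)))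
  (X : Λ → EuclideanSpace ℝ (Fin n))

lemma X_bounds (hXcont : Continuous X) (hXne : ∀ x, X x ≠ 0) :
    ∃ m M : ℝ, 0 < m ∧ 0 < M ∧ ∀ x, m ≤ ‖X x‖ ∧ ‖X x‖ ≤ M := by
  rcases isEmpty_or_nonempty Λ with hΛ | hΛ
  · exact ⟨1, 1, one_pos, one_pos, fun x => hΛ.elim x⟩
  · have hc : ContinuousOn (fun x => ‖X x‖) Set.univ := (hXcont.norm).continuousOn
    obtain ⟨x₁, -, h₁⟩ := isCompact_univ.exists_isMinOn Set.univ_nonempty hc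
    obtain ⟨x₂, -, h₂⟩ := isCompact_univ.exists_isMaxOn Set.univ_nonempty hc
    rw [isMinOn_iff] at h₁
    rw [isMaxOn_iff] at h₂
    exact ⟨‖X x₁‖, ‖X x₂‖, norm_pos_iff.mpr (hXne x₁),
      lt_of_lt_of_le (norm_pos_iff.mpr (hXne x₁)) (h₂ x₁ trivial),
      fun x => ⟨h₁ x trivial, h₂ x trivial⟩⟩

lemma D_bound (hDcont : Continuous fun p : ℝ × Λ => D p.1 p.2) (a b : ℝ) :
    ∃ K : ℝ, 1 ≤ K ∧ ∀ t ∈ Set.Icc a b, ∀ x, ‖D t x‖ ≤ K := by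
  obtain ⟨K₀, hK₀⟩ := (isCompact_Icc.prod isCompact_univ).exists_bound_of_continuousOn
    (hDcont.continuousOn (s := Set.Icc a b ×ˢ Set.univ))
  exact ⟨max K₀ 1, le_max_right _ _, fun t ht x =>
    le_trans (hK₀ (t, x) (Set.mk_mem_prod ht trivial)) (le_max_left _ _)⟩

section Group
variable (hφ0 : ∀ x, φ 0 x = x) (hφadd : ∀ s t x, φ (t + s) x = φ t (φ s x))
  (hD0 : ∀ x, D 0 x = ContinuousLinearMap.id ℝ _)
  (hDco : ∀ s t x, D (t + s) x = (D t (φ s x)).comp (D s x))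

include hφ0 hφadd in
lemma phi_cancel (t : ℝ) (x : Λ) : φ (-t) (φ t x) = x := by
  rw [← hφadd t (-t) x, neg_add_cancel, hφ0]

include hD0 hDco in
lemma D_inv_left (t : ℝ) (x : Λ) (w : EuclideanSpace ℝ (Fin n)) :
    D (-t) (φ t x) (D t x w) = w := by
  have h := hDco t (-t) x
  rw [neg_add_cancel, hD0] at h
  have := congrArg (fun (A : EuclideanSpace ℝ (Fin n) →L[ℝ] EuclideanSpace ℝ (Fin n)) => A w) h
  simpa using this.symm

include hφ0 hφadd hD0 hDco in
lemma D_inv_right (t : ℝ) (x : Λ) (w : EuclideanSpace ℝ (Fin n)) :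
    D t x (D (-t) (φ t x) w) = w := by
  have h := hDco (-t) t (φ t x)
  rw [add_neg_cancel, hD0, phi_cancel φ hφ0 hφadd] at h
  have := congrArg (fun (A : EuclideanSpace ℝ (Fin n) →L[ℝ] EuclideanSpace ℝ (Fin n)) => A w) h
  simpa using this.symm

end Group

lemma poincare_apply (t : ℝ) (x : Λ) (v : EuclideanSpace ℝ (Fin n)) :
    poincare φ D X t x v = pr (X (φ t x)) (D t x v) := rfl

lemma poincare_pr (hXinv : ∀ t x, D t x (X x) = X (φ t x)) (t : ℝ) (x : Λ)
    (v : EuclideanSpace ℝ (Fin n)) :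
    poincare φ D X t x (pr (X x) v) = pr (X (φ t x)) (D t x v) := by
  obtain ⟨c, hc⟩ := exists_sub_pr (X x) v
  have hw : pr (X x) v = v - c • X x := by rw [← hc]; abel
  rw [poincare_apply, hw, map_sub, map_smul, hXinv, map_sub, pr_smul_self, sub_zero]

lemma angle_bound (hDcont : Continuous fun p : ℝ × Λ => D p.1 p.2)
    (hXcont : Continuous X) (hXne : ∀ x, X x ≠ 0)
    (hXinv : ∀ t x, D t x (X x) = X (φ t x))
    (Es : Λ → Submodule ℝ (EuclideanSpace ℝ (Fin n))) (C lam : ℝ) (hC : 0 < C) (hlam : 0 < lam)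
    (hEs : ∀ x, ∀ v ∈ Es x, ∀ t ≥ (0:ℝ), ‖D t x v‖ ≤ C * Real.exp (-lam * t) * ‖v‖) :
    ∃ δ : ℝ, 0 < δ ∧ ∀ x, ∀ v ∈ Es x, ‖v‖ ≤ δ * ‖pr (X x) v‖ := by
  obtain ⟨m, M, hm, hM, hmM⟩ := X_bounds X hXcont hXne
  set q : ℝ := 2 * M * C / m with hq_def
  have hq : 0 < q := by positivity
  set T : ℝ := max 0 (Real.log q / lam) with hT_def
  have hT0 : (0:ℝ) ≤ T := le_max_left _ _
  have hexpT : q ≤ Real.exp (lam * T) := by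
    have h1 : Real.log q / lam ≤ T := le_max_right _ _
    have h2 : Real.log q ≤ lam * T := by
      rw [div_le_iff₀ hlam] at h1; linarith
    calc q = Real.exp (Real.log q) := (Real.exp_log hq).symm
      _ ≤ Real.exp (lam * T) := Real.exp_le_exp.mpr h2
  have he2 : C * Real.exp (-lam * T) * (2 * M) ≤ m := by
    have hEpos : 0 < Real.exp (lam * T) := Real.exp_pos _
    have hqe : 2 * M * C ≤ m * Real.exp (lam * T) := by
      have h := hexpT
      rw [hq_def, div_le_iff₀ hm] at h
      linarith
    have heq : C * Real.exp (-(lam * T)) * (2 * M)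
        = 2 * M * C / Real.exp (lam * T) := by
      rw [Real.exp_neg]; ring
    rw [neg_mul, heq, div_le_iff₀ hEpos]
    linarith
  obtain ⟨K, hK1, hK⟩ := D_bound D hDcont T T
  refine ⟨2 + 2 * K * M / m, by positivity, fun x v hv => ?_⟩
  set w := pr (X x) v with hw_def
  obtain ⟨b, hb⟩ := exists_sub_pr (X x) v
  have hvw : v = w + b • X x := by rw [hw_def, ← hb]; abel
  have hv1 : ‖D T x v‖ ≤ C * Real.exp (-lam * T) * ‖v‖ := hEs x v hv T hT0
  have hDw : ‖D T x w‖ ≤ K * ‖w‖ :=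
    le_trans ((D T x).le_opNorm w)
      (mul_le_mul_of_nonneg_right (hK T ⟨le_rfl, le_rfl⟩ x) (norm_nonneg w))
  have hDv : D T x v = D T x w + b • X (φ T x) := by
    rw [hvw, map_add, map_smul, hXinv]
  have hbm : |b| * m ≤ ‖D T x v‖ + K * ‖w‖ := by
    have h1 : ‖b • X (φ T x)‖ = |b| * ‖X (φ T x)‖ := by
      rw [norm_smul, Real.norm_eq_abs]
    have h2 : |b| * m ≤ ‖b • X (φ T x)‖ := by
      rw [h1]
      exact mul_le_mul_of_nonneg_left (hmM (φ T x)).1 (abs_nonneg b)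
    have h3 : b • X (φ T x) = D T x v - D T x w := by rw [hDv]; abel
    calc |b| * m ≤ ‖b • X (φ T x)‖ := h2
      _ = ‖D T x v - D T x w‖ := by rw [h3]
      _ ≤ ‖D T x v‖ + ‖D T x w‖ := norm_sub_le _ _
      _ ≤ ‖D T x v‖ + K * ‖w‖ := by linarith
  have hvest : ‖v‖ ≤ ‖w‖ + |b| * M := by
    calc ‖v‖ = ‖w + b • X x‖ := by rw [← hvw]
      _ ≤ ‖w‖ + ‖b • X x‖ := norm_add_le _ _
      _ ≤ ‖w‖ + |b| * M := by
          rw [norm_smul, Real.norm_eq_abs]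
          exact add_le_add le_rfl (mul_le_mul_of_nonneg_left (hmM x).2 (abs_nonneg b))
  have key : m * ‖v‖ ≤ (2 * m + 2 * K * M) * ‖w‖ := by
    have A1 := mul_le_mul_of_nonneg_right hbm (by linarith : (0:ℝ) ≤ 2 * M)
    have A2 := mul_le_mul_of_nonneg_right hv1 (by linarith : (0:ℝ) ≤ 2 * M)
    have A3 := mul_le_mul_of_nonneg_right he2 (norm_nonneg v)
    have A4 := mul_le_mul_of_nonneg_left hvest (le_of_lt hm)
    nlinarith [norm_nonneg w, abs_nonneg b, norm_nonneg v, norm_nonneg (D T x v)]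
  have : ‖v‖ ≤ (2 * m + 2 * K * M) * ‖w‖ / m := by
    rw [le_div_iff₀ hm]; linarith
  calc ‖v‖ ≤ (2 * m + 2 * K * M) * ‖w‖ / m := this
    _ = (2 + 2 * K * M / m) * ‖w‖ := by field_simp


/-- The component of `D s x v` along the flow direction at `φ s x`. -/
noncomputable def cf (x : Λ) (v : EuclideanSpace ℝ (Fin n)) (s : ℝ) : ℝ :=
  ⟪X (φ s x), D s x v⟫ / ‖X (φ s x)‖ ^ 2

lemma cf_spec (s : ℝ) (x : Λ) (v : EuclideanSpace ℝ (Fin n)) :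
    D s x v = poincare φ D X s x v + cf φ D X x v s • X (φ s x) := by
  have h := sub_pr (X (φ s x)) (D s x v)
  rw [poincare_apply]
  unfold cf
  rw [← h]; abel

lemma cf_step (hφadd : ∀ s t x, φ (t + s) x = φ t (φ s x))
    (hDco : ∀ s t x, D (t + s) x = (D t (φ s x)).comp (D s x))
    (hXinv : ∀ t x, D t x (X x) = X (φ t x))
    (m : ℝ) (hm : 0 < m) (hmlow : ∀ x, m ≤ ‖X x‖)
    (K : ℝ) (hK0 : 0 ≤ K) (hK : ∀ t ∈ Set.Icc (0:ℝ) 1, ∀ x, ‖D t x‖ ≤ K)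
    (C lam : ℝ) (hC : 0 ≤ C)
    (x : Λ) (v : EuclideanSpace ℝ (Fin n))
    (hPest : ∀ s ≥ (0:ℝ), ‖poincare φ D X s x v‖ ≤ C * Real.exp (-lam * s) * ‖v‖)
    (s : ℝ) (hs : 0 ≤ s) (t : ℝ) (ht : t ∈ Set.Icc (0:ℝ) 1) :
    |cf φ D X x v (t + s) - cf φ D X x v s| ≤ K * C / m * Real.exp (-lam * s) * ‖v‖ := by
  set y := X (φ (t + s) x) with hy_def
  have hym : m ≤ ‖y‖ := hmlow _
  have hy0 : (0:ℝ) < ‖y‖ := lt_of_lt_of_le hm hym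
  set u := D t (φ s x) (poincare φ D X s x v) with hu_def
  have hDts : D (t + s) x v = u + cf φ D X x v s • y := by
    calc D (t + s) x v = D t (φ s x) (D s x v) := by rw [hDco s t x]; rfl
      _ = D t (φ s x) (poincare φ D X s x v + cf φ D X x v s • X (φ s x)) := by
          rw [← cf_spec]
      _ = u + cf φ D X x v s • y := by
          rw [map_add, map_smul, hXinv, hu_def, hy_def, hφadd]
  have hy2 : (‖y‖:ℝ) ^ 2 ≠ 0 := by positivity
  have hcf_eq : cf φ D X x v (t + s) - cf φ D X x v s = ⟪y, u⟫ / ‖y‖ ^ 2 := by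
    have e0 : cf φ D X x v (t + s) = ⟪y, D (t + s) x v⟫ / ‖y‖ ^ 2 := by rw [hy_def]; rfl
    have e1 : cf φ D X x v (t + s) = ⟪y, u⟫ / ‖y‖ ^ 2 + cf φ D X x v s := by
      rw [e0, hDts, inner_add_right, real_inner_smul_right, real_inner_self_eq_norm_sq,
        add_div, mul_div_assoc, div_self hy2, mul_one]
    rw [e1]; ring
  have hu_norm : ‖u‖ ≤ K * (C * Real.exp (-lam * s) * ‖v‖) := by
    calc ‖u‖ ≤ ‖D t (φ s x)‖ * ‖poincare φ D X s x v‖ := (D t (φ s x)).le_opNorm _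
      _ ≤ K * (C * Real.exp (-lam * s) * ‖v‖) :=
          mul_le_mul (hK t ht _) (hPest s hs) (norm_nonneg _) hK0
  have hnum : |⟪y, u⟫| ≤ ‖y‖ * (K * (C * Real.exp (-lam * s) * ‖v‖)) := by
    calc |⟪y, u⟫| ≤ ‖y‖ * ‖u‖ := abs_real_inner_le_norm y u
      _ ≤ ‖y‖ * (K * (C * Real.exp (-lam * s) * ‖v‖)) := by
          exact mul_le_mul_of_nonneg_left hu_norm (norm_nonneg y)
  rw [hcf_eq, abs_div, abs_of_nonneg (by positivity : (0:ℝ) ≤ ‖y‖ ^ 2)]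
  calc |⟪y, u⟫| / ‖y‖ ^ 2 ≤ (‖y‖ * (K * (C * Real.exp (-lam * s) * ‖v‖))) / ‖y‖ ^ 2 := by
        gcongr
    _ = (K * (C * Real.exp (-lam * s) * ‖v‖)) / ‖y‖ := by
        rw [pow_two, mul_div_mul_left _ _ (ne_of_gt hy0)]
    _ ≤ (K * (C * Real.exp (-lam * s) * ‖v‖)) / m := by
        gcongr
    _ = K * C / m * Real.exp (-lam * s) * ‖v‖ := by ring

lemma stable_construct
    (hφ0 : ∀ x, φ 0 x = x) (hφadd : ∀ s t x, φ (t + s) x = φ t (φ s x))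
    (hDcont : Continuous fun p : ℝ × Λ => D p.1 p.2)
    (hD0 : ∀ x, D 0 x = ContinuousLinearMap.id ℝ _)
    (hDco : ∀ s t x, D (t + s) x = (D t (φ s x)).comp (D s x))
    (hXcont : Continuous X) (hXne : ∀ x, X x ≠ 0)
    (hXinv : ∀ t x, D t x (X x) = X (φ t x))
    (Ns : Λ → Submodule ℝ (EuclideanSpace ℝ (Fin n)))
    (hNsle : ∀ x, Ns x ≤ (ℝ ∙ X x)ᗮ)
    (hNsInv : ∀ t x, (Ns x).map (poincare φ D X t x : EuclideanSpace ℝ (Fin n) →ₗ[ℝ] EuclideanSpace ℝ (Fin n)) = Ns (φ t x))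
    (C lam : ℝ) (hC : 0 < C) (hlam : 0 < lam)
    (hNsEst : ∀ x, ∀ v ∈ Ns x, ∀ t ≥ (0:ℝ),
      ‖poincare φ D X t x v‖ ≤ C * Real.exp (-lam * t) * ‖v‖) :
    ∃ Es : Λ → Submodule ℝ (EuclideanSpace ℝ (Fin n)),
      (∀ t x, (Es x).map (D t x : EuclideanSpace ℝ (Fin n) →ₗ[ℝ] EuclideanSpace ℝ (Fin n)) = Es (φ t x)) ∧
      (∀ x, ∀ w ∈ Es x, pr (X x) w ∈ Ns x) ∧
      (∀ x, ∀ v ∈ Ns x, ∃ a : ℝ, v + a • X x ∈ Es x) ∧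
      (∀ x, ∀ w ∈ Es x, pr (X x) w = 0 → w = 0) ∧
      (∃ C' : ℝ, 0 < C' ∧ ∀ x, ∀ w ∈ Es x, ∀ t ≥ (0:ℝ),
        ‖D t x w‖ ≤ C' * Real.exp (-lam * t) * ‖w‖) := by
  obtain ⟨m, M, hm, hM, hmM⟩ := X_bounds X hXcont hXne
  obtain ⟨K, hK1, hK⟩ := D_bound D hDcont 0 1
  set A : ℝ := K * C / m / (1 - Real.exp (-lam)) with hA_def
  have hr1 : Real.exp (-lam) < 1 := Real.exp_lt_one_iff.mpr (by linarith)
  have hA0 : 0 ≤ A := by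
    apply div_nonneg (by positivity) (by linarith)
  -- the key limit fact
  have key : ∀ x, ∀ v ∈ Ns x, ∃ L : ℝ, Tendsto (cf φ D X x v) atTop (𝓝 L) ∧
      ∀ s ≥ (0:ℝ), |cf φ D X x v s - L| ≤ A * Real.exp (-lam * s) * ‖v‖ := by
    intro x v hv
    have hstep : ∀ s ≥ (0:ℝ), ∀ t ∈ Set.Icc (0:ℝ) 1,
        |cf φ D X x v (t + s) - cf φ D X x v s| ≤ (K * C / m * ‖v‖) * Real.exp (-lam * s) := by
      intro s hs t ht
      have := cf_step φ D X hφadd hDco hXinv m hm (fun z => (hmM z).1) K (by linarith) hK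
        C lam (le_of_lt hC) x v (fun s' hs' => hNsEst x v hv s' hs') s hs t ht
      calc |cf φ D X x v (t + s) - cf φ D X x v s| ≤ K * C / m * Real.exp (-lam * s) * ‖v‖ :=
            this
        _ = (K * C / m * ‖v‖) * Real.exp (-lam * s) := by ring
    have htel := telescope (cf φ D X x v) (K * C / m * ‖v‖) lam (by positivity) hlam hstep
    obtain ⟨L, hLt, hLb⟩ := limit_of_telescope (cf φ D X x v)
      (K * C / m * ‖v‖ / (1 - Real.exp (-lam))) lam hlam htel
    refine ⟨L, hLt, fun s hs => ?_⟩
    calc |cf φ D X x v s - L| ≤ K * C / m * ‖v‖ / (1 - Real.exp (-lam)) * Real.exp (-lam * s) :=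
          hLb s hs
      _ = A * Real.exp (-lam * s) * ‖v‖ := by rw [hA_def]; ring
  -- tendsto of the Poincaré part
  have hPtend : ∀ x, ∀ v ∈ Ns x, Tendsto (fun s => poincare φ D X s x v) atTop (𝓝 0) := by
    intro x v hv
    apply squeeze_zero_norm' (a := fun s => (C * ‖v‖) * Real.exp (-lam * s))
    · filter_upwards [eventually_ge_atTop (0:ℝ)] with s hs
      calc ‖poincare φ D X s x v‖ ≤ C * Real.exp (-lam * s) * ‖v‖ := hNsEst x v hv s hs
        _ = (C * ‖v‖) * Real.exp (-lam * s) := by ring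
    · exact tendsto_exp_decay _ lam hlam
  -- decomposition of D applied to v + a • X x
  have hDs : ∀ x (v : EuclideanSpace ℝ (Fin n)) (a s : ℝ),
      D s x (v + a • X x) = poincare φ D X s x v + (cf φ D X x v s + a) • X (φ s x) := by
    intro x v a s
    rw [map_add, map_smul, hXinv, cf_spec φ D X s x v, add_smul]
    abel
  -- the stable bundle
  set Es : Λ → Submodule ℝ (EuclideanSpace ℝ (Fin n)) := fun x =>
    { carrier := {w | pr (X x) w ∈ Ns x ∧ Tendsto (fun s => D s x w) atTop (𝓝 0)}
      add_mem' := by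
        rintro a b ⟨ha1, ha2⟩ ⟨hb1, hb2⟩
        refine ⟨by rw [map_add]; exact (Ns _).add_mem ha1 hb1, ?_⟩
        have := ha2.add hb2
        simpa using this
      zero_mem' := by
        refine ⟨by simp, ?_⟩
        simpa using tendsto_const_nhds (α := ℝ) (x := (0 : EuclideanSpace ℝ (Fin n)))
      smul_mem' := by
        rintro c a ⟨ha1, ha2⟩
        refine ⟨by rw [map_smul]; exact (Ns _).smul_mem c ha1, ?_⟩
        have := ha2.const_smul c
        simpa using this } with hEs_def
  have hmem : ∀ x (w : EuclideanSpace ℝ (Fin n)), w ∈ Es x ↔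
      (pr (X x) w ∈ Ns x ∧ Tendsto (fun s => D s x w) atTop (𝓝 0)) := fun x w => Iff.rfl
  refine ⟨Es, ?_, ?_, ?_, ?_, ?_⟩
  · -- invariance
    intro t x
    ext w'
    simp only [Submodule.mem_map]
    constructor
    · rintro ⟨w, hw, rfl⟩
      obtain ⟨hw1, hw2⟩ := (hmem x w).mp hw
      rw [hmem]
      rw [ContinuousLinearMap.coe_coe]
      constructor
      · have h1 : pr (X (φ t x)) (D t x w) = poincare φ D X t x (pr (X x) w) :=
          (poincare_pr φ D X hXinv t x w).symm
        rw [h1, ← hNsInv t x]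
        exact Submodule.mem_map_of_mem hw1
      · have h2 : (fun s => D s (φ t x) (D t x w)) = fun s => D (s + t) x w := by
          funext s
          rw [hDco t s x]; rfl
        rw [h2]
        exact hw2.comp (tendsto_atTop_add_const_right atTop t tendsto_id)
    · intro hw'
      obtain ⟨h1', h2'⟩ := (hmem (φ t x) w').mp hw'
      have hyx : φ (-t) (φ t x) = x := phi_cancel φ hφ0 hφadd t x
      refine ⟨D (-t) (φ t x) w', ?_, D_inv_right φ D hφ0 hφadd hD0 hDco t x w'⟩
      rw [hmem]
      constructor
      · -- pr (X x) (D (-t) (φ t x) w') ∈ Ns x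
        have h3 : pr (X x) (D (-t) (φ t x) w') = poincare φ D X (-t) (φ t x) w' := by
          rw [poincare_apply, hyx]
        have h4 : poincare φ D X (-t) (φ t x) w'
            = poincare φ D X (-t) (φ t x) (pr (X (φ t x)) w') := by
          rw [poincare_pr φ D X hXinv, poincare_apply]
        rw [h3, h4]
        have h5 : poincare φ D X (-t) (φ t x) (pr (X (φ t x)) w') ∈ Ns (φ (-t) (φ t x)) := by
          rw [← hNsInv (-t) (φ t x)]
          exact Submodule.mem_map_of_mem h1'
        rwa [hyx] at h5
      · have h6 : (fun s => D s x (D (-t) (φ t x) w')) = fun s => D (s + -t) (φ t x) w' := by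
          funext s
          have h7 := hDco (-t) s (φ t x)
          rw [hyx] at h7
          rw [h7]; rfl
        rw [h6]
        exact h2'.comp (tendsto_atTop_add_const_right atTop (-t) tendsto_id)
  · -- pr maps Es into Ns
    intro x w hw
    exact ((hmem x w).mp hw).1
  · -- existence over Ns
    intro x v hv
    obtain ⟨L, hLt, hLb⟩ := key x v hv
    refine ⟨-L, ?_⟩
    rw [hmem]
    constructor
    · rw [map_add, pr_smul_self, add_zero, pr_eq_self (hNsle x hv)]
      exact hv
    · have heq : (fun s => D s x (v + (-L) • X x))
          = fun s => poincare φ D X s x v + (cf φ D X x v s + -L) • X (φ s x) := by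
        funext s; exact hDs x v (-L) s
      rw [heq]
      have hX0 : Tendsto (fun s => (cf φ D X x v s + -L) • X (φ s x)) atTop
          (𝓝 (0 : EuclideanSpace ℝ (Fin n))) := by
        apply squeeze_zero_norm' (a := fun s => (A * M * ‖v‖) * Real.exp (-lam * s))
        · filter_upwards [eventually_ge_atTop (0:ℝ)] with s hs
          have h1 : ‖(cf φ D X x v s + -L) • X (φ s x)‖
              = |cf φ D X x v s - L| * ‖X (φ s x)‖ := by
            rw [norm_smul, Real.norm_eq_abs, sub_eq_add_neg]
          rw [h1]
          calc |cf φ D X x v s - L| * ‖X (φ s x)‖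
              ≤ (A * Real.exp (-lam * s) * ‖v‖) * M :=
                mul_le_mul (hLb s hs) (hmM _).2 (norm_nonneg _) (by positivity)
            _ = (A * M * ‖v‖) * Real.exp (-lam * s) := by ring
        · exact tendsto_exp_decay _ lam hlam
      have := (hPtend x v hv).add hX0
      simpa using this
  · -- pr w = 0 → w = 0
    intro x w hw hpr
    obtain ⟨hw1, hw2⟩ := (hmem x w).mp hw
    obtain ⟨b, hb⟩ := exists_sub_pr (X x) w
    rw [hpr, sub_zero] at hb
    have hnorm : ∀ s : ℝ, |b| * m ≤ ‖D s x w‖ := by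
      intro s
      rw [hb, map_smul, hXinv, norm_smul, Real.norm_eq_abs]
      exact mul_le_mul_of_nonneg_left (hmM _).1 (abs_nonneg b)
    have htn : Tendsto (fun s => ‖D s x w‖) atTop (𝓝 0) := by
      have := hw2.norm
      simpa using this
    have hble : |b| * m ≤ 0 := ge_of_tendsto htn (Eventually.of_forall hnorm)
    have hb0 : b = 0 := by
      have := abs_nonneg b
      have : |b| = 0 := by nlinarith
      exact abs_eq_zero.mp this
    rw [hb, hb0, zero_smul]
  · -- the estimate
    refine ⟨C + A * M, by positivity, ?_⟩
    intro x w hw t ht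
    obtain ⟨hw1, hw2⟩ := (hmem x w).mp hw
    obtain ⟨b, hb⟩ := exists_sub_pr (X x) w
    set v := pr (X x) w with hv_def
    have hwv : w = v + b • X x := by rw [hv_def, ← hb]; abel
    obtain ⟨L, hLt, hLb⟩ := key x v hw1
    -- identify b = -L
    have hDw : ∀ s, D s x w = poincare φ D X s x v + (cf φ D X x v s + b) • X (φ s x) := by
      intro s
      rw [hwv]
      exact hDs x v b s
    have hcoef : Tendsto (fun s => (cf φ D X x v s + b) • X (φ s x)) atTop
        (𝓝 (0 : EuclideanSpace ℝ (Fin n))) := by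
      have heq : (fun s => (cf φ D X x v s + b) • X (φ s x))
          = fun s => D s x w - poincare φ D X s x v := by
        funext s; rw [hDw s]; abel
      rw [heq]
      have := hw2.sub (hPtend x v hw1)
      simpa using this
    have hscal : Tendsto (fun s => cf φ D X x v s + b) atTop (𝓝 0) := by
      apply squeeze_zero_norm' (a := fun s => ‖(cf φ D X x v s + b) • X (φ s x)‖ / m)
      · filter_upwards with s
        show ‖cf φ D X x v s + b‖ ≤ ‖(cf φ D X x v s + b) • X (φ s x)‖ / m
        rw [Real.norm_eq_abs, le_div_iff₀ hm, norm_smul, Real.norm_eq_abs]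
        exact mul_le_mul_of_nonneg_left (hmM _).1 (abs_nonneg _)
      · have := (hcoef.norm).div_const m
        simpa using this
    have hbL : b = -L := by
      have h1 : Tendsto (fun s => cf φ D X x v s + b) atTop (𝓝 (L + b)) :=
        hLt.add tendsto_const_nhds
      have := tendsto_nhds_unique h1 hscal
      linarith
    -- now the estimate
    have hest1 : ‖D t x w‖ ≤ C * Real.exp (-lam * t) * ‖v‖
        + A * Real.exp (-lam * t) * ‖v‖ * M := by
      rw [hDw t]
      calc ‖poincare φ D X t x v + (cf φ D X x v t + b) • X (φ t x)‖
          ≤ ‖poincare φ D X t x v‖ + ‖(cf φ D X x v t + b) • X (φ t x)‖ := norm_add_le _ _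
        _ ≤ C * Real.exp (-lam * t) * ‖v‖ + A * Real.exp (-lam * t) * ‖v‖ * M := by
            apply add_le_add (hNsEst x v hw1 t ht)
            rw [norm_smul, Real.norm_eq_abs]
            have h2 : |cf φ D X x v t + b| = |cf φ D X x v t - L| := by rw [hbL]; ring_nf
            rw [h2]
            exact mul_le_mul (hLb t ht) (hmM _).2 (norm_nonneg _) (by positivity)
    have hvw : ‖v‖ ≤ ‖w‖ := norm_pr_le _ _
    calc ‖D t x w‖ ≤ C * Real.exp (-lam * t) * ‖v‖ + A * Real.exp (-lam * t) * ‖v‖ * M := hest1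
      _ ≤ C * Real.exp (-lam * t) * ‖w‖ + A * Real.exp (-lam * t) * ‖w‖ * M := by
          gcongr
      _ = (C + A * M) * Real.exp (-lam * t) * ‖w‖ := by ring


lemma poincare_neg (t : ℝ) (x : Λ) :
    poincare (fun t x => φ (-t) x) (fun t x => D (-t) x) X t x = poincare φ D X (-t) x := rfl

lemma pr_bundle_inv (hXinv : ∀ t x, D t x (X x) = X (φ t x))
    (Es : Λ → Submodule ℝ (EuclideanSpace ℝ (Fin n)))
    (hEsInv : ∀ t x, (Es x).map (D t x : EuclideanSpace ℝ (Fin n) →ₗ[ℝ] EuclideanSpace ℝ (Fin n)) = Es (φ t x)) (t : ℝ) (x : Λ) :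
    ((Es x).map (pr (X x) : EuclideanSpace ℝ (Fin n) →ₗ[ℝ] EuclideanSpace ℝ (Fin n))).map (poincare φ D X t x : EuclideanSpace ℝ (Fin n) →ₗ[ℝ] EuclideanSpace ℝ (Fin n))
      = (Es (φ t x)).map (pr (X (φ t x)) : EuclideanSpace ℝ (Fin n) →ₗ[ℝ] EuclideanSpace ℝ (Fin n)) := by
  ext w
  simp only [Submodule.mem_map]
  constructor
  · rintro ⟨u, ⟨v, hv, rfl⟩, rfl⟩
    refine ⟨D t x v, ?_, (poincare_pr φ D X hXinv t x v).symm⟩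
    rw [← hEsInv t x]
    exact Submodule.mem_map_of_mem hv
  · rintro ⟨v', hv', rfl⟩
    rw [← hEsInv t x] at hv'
    obtain ⟨v, hv, rfl⟩ := hv'
    exact ⟨pr (X x) v, ⟨v, hv, rfl⟩, poincare_pr φ D X hXinv t x v⟩

end Flow
end Stmt13Aux

open Stmt13Aux

/-- A compact invariant nonsingular set is hyperbolic for the flow if and only if the
associated linear Poincaré flow has a hyperbolic splitting of the normal bundle. -/
theorem stmt13 {n : ℕ} {Λ : Type*} [TopologicalSpace Λ] [CompactSpace Λ]
    (φ : ℝ → Λ → Λ) (hφcont : Continuous fun p : ℝ × Λ => φ p.1 p.2)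
    (hφ0 : ∀ x, φ 0 x = x) (hφadd : ∀ s t x, φ (t + s) x = φ t (φ s x))
    (D : ℝ → Λ → (EuclideanSpace ℝ (Fin n) →L[ℝ] EuclideanSpace ℝ (Fin n)))
    (hDcont : Continuous fun p : ℝ × Λ => D p.1 p.2)
    (hD0 : ∀ x, D 0 x = ContinuousLinearMap.id ℝ _)
    (hDco : ∀ s t x, D (t + s) x = (D t (φ s x)).comp (D s x))
    (X : Λ → EuclideanSpace ℝ (Fin n)) (hXcont : Continuous X)
    (hXne : ∀ x, X x ≠ 0) (hXinv : ∀ t x, D t x (X x) = X (φ t x)) :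
    -- hyperbolicity for the flow
    (∃ Es Eu : Λ → Submodule ℝ (EuclideanSpace ℝ (Fin n)),
      (∀ t x, (Es x).map (D t x : EuclideanSpace ℝ (Fin n) →ₗ[ℝ] EuclideanSpace ℝ (Fin n)) = Es (φ t x)) ∧
      (∀ t x, (Eu x).map (D t x : EuclideanSpace ℝ (Fin n) →ₗ[ℝ] EuclideanSpace ℝ (Fin n)) = Eu (φ t x)) ∧
      (∀ x, Es x ⊓ ((ℝ ∙ X x) ⊔ Eu x) = ⊥) ∧
      (∀ x, (ℝ ∙ X x) ⊓ Eu x = ⊥) ∧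
      (∀ x, Es x ⊔ (ℝ ∙ X x) ⊔ Eu x = ⊤) ∧
      (∃ C lam : ℝ, 0 < C ∧ 0 < lam ∧
        (∀ x, ∀ t ≥ 0, opNormOn (D t x) (Es x) ≤ C * Real.exp (-lam * t)) ∧
        (∀ x, ∀ t ≥ 0, opNormOn (D (-t) x) (Eu x) ≤ C * Real.exp (-lam * t))))
    ↔
    -- hyperbolicity for the linear Poincaré flow
    (∃ Ns Nu : Λ → Submodule ℝ (EuclideanSpace ℝ (Fin n)),
      (∀ x, Ns x ≤ (ℝ ∙ X x)ᗮ) ∧ (∀ x, Nu x ≤ (ℝ ∙ X x)ᗮ) ∧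
      (∀ x, Ns x ⊓ Nu x = ⊥) ∧ (∀ x, Ns x ⊔ Nu x = (ℝ ∙ X x)ᗮ) ∧
      (∀ t x, (Ns x).map (poincare φ D X t x : EuclideanSpace ℝ (Fin n) →ₗ[ℝ] EuclideanSpace ℝ (Fin n)) = Ns (φ t x)) ∧
      (∀ t x, (Nu x).map (poincare φ D X t x : EuclideanSpace ℝ (Fin n) →ₗ[ℝ] EuclideanSpace ℝ (Fin n)) = Nu (φ t x)) ∧
      (∃ C lam : ℝ, 0 < C ∧ 0 < lam ∧
        (∀ x, ∀ t ≥ 0, opNormOn (poincare φ D X t x) (Ns x) ≤ C * Real.exp (-lam * t)) ∧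
        (∀ x, ∀ t ≥ 0, opNormOn (poincare φ D X (-t) x) (Nu x) ≤ C * Real.exp (-lam * t)))) := by
 
  constructor
  · -- flow hyperbolic → Poincaré hyperbolic
    rintro ⟨Es, Eu, hEsInv, hEuInv, hdisj1, hdisj2, hsup,
      C, lam, hC, hlam, hEsEst, hEuEst⟩
    have hEs' : ∀ x, ∀ v ∈ Es x, ∀ t ≥ (0:ℝ), ‖D t x v‖ ≤ C * Real.exp (-lam * t) * ‖v‖ := by
      intro x v hv t ht
      calc ‖D t x v‖ ≤ opNormOn (D t x) (Es x) * ‖v‖ := norm_le_opNormOn _ _ hv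
        _ ≤ C * Real.exp (-lam * t) * ‖v‖ :=
            mul_le_mul_of_nonneg_right (hEsEst x t ht) (norm_nonneg v)
    have hEu' : ∀ x, ∀ v ∈ Eu x, ∀ t ≥ (0:ℝ), ‖D (-t) x v‖ ≤ C * Real.exp (-lam * t) * ‖v‖ := by
      intro x v hv t ht
      calc ‖D (-t) x v‖ ≤ opNormOn (D (-t) x) (Eu x) * ‖v‖ := norm_le_opNormOn _ _ hv
        _ ≤ C * Real.exp (-lam * t) * ‖v‖ :=
            mul_le_mul_of_nonneg_right (hEuEst x t ht) (norm_nonneg v)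
    have hD'cont : Continuous fun p : ℝ × Λ => D (-p.1) p.2 :=
      hDcont.comp ((continuous_fst.neg).prodMk continuous_snd)
    obtain ⟨δs, hδs0, hδs⟩ := angle_bound φ D X hDcont hXcont hXne hXinv Es C lam hC hlam hEs'
    obtain ⟨δu, hδu0, hδu⟩ := angle_bound (fun t x => φ (-t) x) (fun t x => D (-t) x) X
      hD'cont hXcont hXne (fun t x => hXinv (-t) x) Eu C lam hC hlam hEu'
    refine ⟨fun x => (Es x).map (pr (X x) : EuclideanSpace ℝ (Fin n) →ₗ[ℝ] EuclideanSpace ℝ (Fin n)), fun x => (Eu x).map (pr (X x) : EuclideanSpace ℝ (Fin n) →ₗ[ℝ] EuclideanSpace ℝ (Fin n)),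
      ?_, ?_, ?_, ?_, ?_, ?_, ?_⟩
    · rintro x w ⟨v, hv, rfl⟩; exact pr_mem _ _
    · rintro x w ⟨v, hv, rfl⟩; exact pr_mem _ _
    · -- Ns ⊓ Nu = ⊥
      intro x
      rw [eq_bot_iff]
      rintro w ⟨⟨v, hv, hveq⟩, ⟨u, hu, hueq⟩⟩
      obtain ⟨bv, hbv⟩ := exists_sub_pr (X x) v
      obtain ⟨bu, hbu⟩ := exists_sub_pr (X x) u
      have hvu : v = (bv - bu) • X x + u := by
        have h1 : v - w = bv • X x := by rw [← hveq]; exact hbv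
        have h2 : u - w = bu • X x := by rw [← hueq]; exact hbu
        have : v - u = (bv - bu) • X x := by
          rw [sub_smul, ← h1, ← h2]; abel
        rw [← this]; abel
      have hvmem : v ∈ Es x ⊓ ((ℝ ∙ X x) ⊔ Eu x) := by
        refine ⟨hv, ?_⟩
        rw [hvu]
        exact Submodule.add_mem_sup
          (Submodule.smul_mem _ _ (Submodule.mem_span_singleton_self _)) hu
      rw [hdisj1 x] at hvmem
      have hv0 : v = 0 := hvmem
      rw [Submodule.mem_bot, ← hveq, hv0, map_zero]
    · -- Ns ⊔ Nu = orth complement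
      intro x
      apply le_antisymm
      · apply sup_le
        · rintro w ⟨v, hv, rfl⟩; exact pr_mem _ _
        · rintro w ⟨v, hv, rfl⟩; exact pr_mem _ _
      · intro w hw
        have hwt : w ∈ Es x ⊔ (ℝ ∙ X x) ⊔ Eu x := by rw [hsup x]; trivial
        obtain ⟨p, hp, f, hf, hpf⟩ := Submodule.mem_sup.mp hwt
        obtain ⟨e, he, c, hc, hec⟩ := Submodule.mem_sup.mp hp
        obtain ⟨r, hr⟩ := Submodule.mem_span_singleton.mp hc
        have hweq : pr (X x) w = pr (X x) e + pr (X x) f := by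
          rw [← hpf, ← hec, ← hr, map_add, map_add, pr_smul_self, add_zero]
        rw [← pr_eq_self hw, hweq]
        exact Submodule.add_mem_sup (Submodule.mem_map_of_mem he)
          (Submodule.mem_map_of_mem hf)
    · exact fun t x => pr_bundle_inv φ D X hXinv Es hEsInv t x
    · exact fun t x => pr_bundle_inv φ D X hXinv Eu hEuInv t x
    · refine ⟨C * max δs δu, lam, ?_, hlam, ?_, ?_⟩
      · have : 0 < max δs δu := lt_max_of_lt_left hδs0
        positivity
      · intro x t ht
        apply opNormOn_le _ _ (by positivity)
        rintro w ⟨v, hv, rfl⟩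
        calc ‖poincare φ D X t x (pr (X x) v)‖ = ‖pr (X (φ t x)) (D t x v)‖ := by
              rw [poincare_pr φ D X hXinv]
          _ ≤ ‖D t x v‖ := norm_pr_le _ _
          _ ≤ C * Real.exp (-lam * t) * ‖v‖ := hEs' x v hv t ht
          _ ≤ C * Real.exp (-lam * t) * (δs * ‖pr (X x) v‖) :=
              mul_le_mul_of_nonneg_left (hδs x v hv) (by positivity)
          _ ≤ C * max δs δu * Real.exp (-lam * t) * ‖pr (X x) v‖ := by
              have h1 : δs ≤ max δs δu := le_max_left _ _
              have h2 : (0:ℝ) ≤ ‖pr (X x) v‖ := norm_nonneg _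
              have h3 : (0:ℝ) < Real.exp (-lam * t) := Real.exp_pos _
              have h4 := mul_le_mul_of_nonneg_right
                (mul_le_mul_of_nonneg_left h1 hC.le) (mul_nonneg h3.le h2)
              linarith
      · intro x t ht
        apply opNormOn_le _ _ (by positivity)
        rintro w ⟨v, hv, rfl⟩
        calc ‖poincare φ D X (-t) x (pr (X x) v)‖ = ‖pr (X (φ (-t) x)) (D (-t) x v)‖ := by
              rw [poincare_pr φ D X hXinv]
          _ ≤ ‖D (-t) x v‖ := norm_pr_le _ _
          _ ≤ C * Real.exp (-lam * t) * ‖v‖ := hEu' x v hv t ht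
          _ ≤ C * Real.exp (-lam * t) * (δu * ‖pr (X x) v‖) :=
              mul_le_mul_of_nonneg_left (hδu x v hv) (by positivity)
          _ ≤ C * max δs δu * Real.exp (-lam * t) * ‖pr (X x) v‖ := by
              have h1 : δu ≤ max δs δu := le_max_right _ _
              have h2 : (0:ℝ) ≤ ‖pr (X x) v‖ := norm_nonneg _
              have h3 : (0:ℝ) < Real.exp (-lam * t) := Real.exp_pos _
              have h4 := mul_le_mul_of_nonneg_right
                (mul_le_mul_of_nonneg_left h1 hC.le) (mul_nonneg h3.le h2)
              linarith
  · -- Poincaré hyperbolic → flow hyperbolic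
    rintro ⟨Ns, Nu, hNsle, hNule, hNdisj, hNsup, hNsInv, hNuInv,
      C, lam, hC, hlam, hNsEst, hNuEst⟩
    have hNs' : ∀ x, ∀ v ∈ Ns x, ∀ t ≥ (0:ℝ),
        ‖poincare φ D X t x v‖ ≤ C * Real.exp (-lam * t) * ‖v‖ := by
      intro x v hv t ht
      calc ‖poincare φ D X t x v‖ ≤ opNormOn (poincare φ D X t x) (Ns x) * ‖v‖ :=
            norm_le_opNormOn _ _ hv
        _ ≤ C * Real.exp (-lam * t) * ‖v‖ :=
            mul_le_mul_of_nonneg_right (hNsEst x t ht) (norm_nonneg v)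
    have hNu' : ∀ x, ∀ v ∈ Nu x, ∀ t ≥ (0:ℝ),
        ‖poincare φ D X (-t) x v‖ ≤ C * Real.exp (-lam * t) * ‖v‖ := by
      intro x v hv t ht
      calc ‖poincare φ D X (-t) x v‖ ≤ opNormOn (poincare φ D X (-t) x) (Nu x) * ‖v‖ :=
            norm_le_opNormOn _ _ hv
        _ ≤ C * Real.exp (-lam * t) * ‖v‖ :=
            mul_le_mul_of_nonneg_right (hNuEst x t ht) (norm_nonneg v)
    obtain ⟨Es, hEsInv, hEsPr, hEsEx, hEsZero, Cs, hCs, hEsEst⟩ :=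
      stable_construct φ D X hφ0 hφadd hDcont hD0 hDco hXcont hXne hXinv Ns hNsle hNsInv
        C lam hC hlam hNs'
    -- the time-reversed system
    have hφ'0 : ∀ x : Λ, φ (-(0:ℝ)) x = x := fun x => by rw [neg_zero]; exact hφ0 x
    have hφ'add : ∀ (s t : ℝ) (x : Λ), φ (-(t + s)) x = φ (-t) (φ (-s) x) := fun s t x => by
      rw [neg_add]; exact hφadd (-s) (-t) x
    have hD'cont : Continuous fun p : ℝ × Λ => D (-p.1) p.2 :=
      hDcont.comp ((continuous_fst.neg).prodMk continuous_snd)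
    have hD'0 : ∀ x : Λ, D (-(0:ℝ)) x = ContinuousLinearMap.id ℝ _ := fun x => by
      rw [neg_zero]; exact hD0 x
    have hD'co : ∀ (s t : ℝ) (x : Λ),
        D (-(t + s)) x = (D (-t) (φ (-s) x)).comp (D (-s) x) := fun s t x => by
      rw [neg_add]; exact hDco (-s) (-t) x
    have hXinv' : ∀ (t : ℝ) (x : Λ), D (-t) x (X x) = X (φ (-t) x) := fun t x => hXinv (-t) x
    have hNuInv' : ∀ (t : ℝ) (x : Λ),
        (Nu x).map (poincare (fun t x => φ (-t) x) (fun t x => D (-t) x) X t x : EuclideanSpace ℝ (Fin n) →ₗ[ℝ] EuclideanSpace ℝ (Fin n))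
          = Nu (φ (-t) x) := fun t x => by
      rw [poincare_neg φ D X t x]; exact hNuInv (-t) x
    have hNu'' : ∀ x, ∀ v ∈ Nu x, ∀ t ≥ (0:ℝ),
        ‖poincare (fun t x => φ (-t) x) (fun t x => D (-t) x) X t x v‖
          ≤ C * Real.exp (-lam * t) * ‖v‖ := by
      intro x v hv t ht
      rw [poincare_neg φ D X t x]
      exact hNu' x v hv t ht
    obtain ⟨Eu, hEuInv', hEuPr, hEuEx, hEuZero, Cu, hCu, hEuEst'⟩ :=
      stable_construct (fun t x => φ (-t) x) (fun t x => D (-t) x) X hφ'0 hφ'add hD'cont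
        hD'0 hD'co hXcont hXne hXinv' Nu hNule hNuInv' C lam hC hlam hNu''
    have hEuInv : ∀ t x, (Eu x).map (D t x : EuclideanSpace ℝ (Fin n) →ₗ[ℝ] EuclideanSpace ℝ (Fin n)) = Eu (φ t x) := by
      intro t x
      have := hEuInv' (-t) x
      simpa using this
    have hmax : (0:ℝ) < max Cs Cu := lt_max_of_lt_left hCs
    refine ⟨Es, Eu, hEsInv, hEuInv, ?_, ?_, ?_, max Cs Cu, lam, hmax, hlam, ?_, ?_⟩
    · -- Es ⊓ (span ⊔ Eu) = ⊥
      intro x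
      rw [eq_bot_iff]
      rintro w ⟨hwE, hwSup⟩
      obtain ⟨c, hc, f, hf, hcf⟩ := Submodule.mem_sup.mp hwSup
      obtain ⟨r, hr⟩ := Submodule.mem_span_singleton.mp hc
      have hprw : pr (X x) w ∈ Ns x := hEsPr x w hwE
      have hprw2 : pr (X x) w ∈ Nu x := by
        rw [← hcf, ← hr, map_add, pr_smul_self, zero_add]
        exact hEuPr x f hf
      have hmem : pr (X x) w ∈ Ns x ⊓ Nu x := ⟨hprw, hprw2⟩
      rw [hNdisj x] at hmem
      rw [Submodule.mem_bot]
      exact hEsZero x w hwE hmem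
    · -- span ⊓ Eu = ⊥
      intro x
      rw [eq_bot_iff]
      rintro w ⟨hwspan, hwEu⟩
      obtain ⟨r, hr⟩ := Submodule.mem_span_singleton.mp hwspan
      have h0 : pr (X x) w = 0 := by rw [← hr]; exact pr_smul_self _ _
      rw [Submodule.mem_bot]
      exact hEuZero x w hwEu h0
    · -- Es ⊔ span ⊔ Eu = ⊤
      intro x
      rw [eq_top_iff]
      intro w _
      have hpw : pr (X x) w ∈ Ns x ⊔ Nu x := by rw [hNsup x]; exact pr_mem _ _
      obtain ⟨v, hv, u, hu, hvu⟩ := Submodule.mem_sup.mp hpw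
      obtain ⟨a, ha⟩ := hEsEx x v hv
      obtain ⟨a', ha'⟩ := hEuEx x u hu
      obtain ⟨b, hb⟩ := exists_sub_pr (X x) w
      have hweq : w = (v + a • X x) + (b - a - a') • X x + (u + a' • X x) := by
        have h1 : w = pr (X x) w + b • X x := by rw [← hb]; abel
        rw [h1, ← hvu, sub_smul, sub_smul]
        abel
      rw [hweq]
      exact Submodule.add_mem_sup
        (Submodule.add_mem_sup ha
          (Submodule.smul_mem _ _ (Submodule.mem_span_singleton_self _)))
        ha'
    · -- stable estimate
      intro x t ht
      apply opNormOn_le _ _ (by positivity)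
      intro v hv
      calc ‖D t x v‖ ≤ Cs * Real.exp (-lam * t) * ‖v‖ := hEsEst x v hv t ht
        _ ≤ max Cs Cu * Real.exp (-lam * t) * ‖v‖ := by
            have h1 : Cs ≤ max Cs Cu := le_max_left _ _
            have h2 : (0:ℝ) ≤ Real.exp (-lam * t) * ‖v‖ :=
              mul_nonneg (Real.exp_pos _).le (norm_nonneg v)
            have h4 := mul_le_mul_of_nonneg_right h1 h2
            linarith
    · -- unstable estimate
      intro x t ht
      apply opNormOn_le _ _ (by positivity)
      intro v hv
      calc ‖D (-t) x v‖ ≤ Cu * Real.exp (-lam * t) * ‖v‖ := by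
            have := hEuEst' x v hv t ht
            simpa using this
        _ ≤ max Cs Cu * Real.exp (-lam * t) * ‖v‖ := by
            have h1 : Cu ≤ max Cs Cu := le_max_right _ _
            have h2 : (0:ℝ) ≤ Real.exp (-lam * t) * ‖v‖ :=
              mul_nonneg (Real.exp_pos _).le (norm_nonneg v)
            have h4 := mul_le_mul_of_nonneg_right h1 h2
            linarith
end
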